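/- Let g be a stratified Lie algebra of step s equipped with its canonical inner product, and let T : g → g be a Lie algebra automorphism with T(g_{-k}) ⊆ g_{-k} for every k, such that for some t > 0, ‖T(X)‖ = t‖X‖ for every X ∈ g_{-1} (a conformal automorphism). If ‖T(X₀)‖ = ‖X₀‖ for one nonzero element X₀ of g, then ‖T(X)‖ = ‖X‖ for every X ∈ g. -/

import Mathlib

open Finset


/-- The subspace spanned by brackets of elements of two subspaces of a Lie algebra. -/
def bracketSpan {L : Type*} [LieRing L] [LieAlgebra ℝ L] (A B : Submodule ℝ L) :
    Submodule ℝ L :=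
  Submodule.span ℝ {z : L | ∃ x ∈ A, ∃ y ∈ B, z = ⁅x, y⁆}

/-- A stratification of step `s` of a Lie algebra `L`: `g j` plays the role of the
stratum `g_{-j}`. -/
structure IsStratification {L : Type*} [LieRing L] [LieAlgebra ℝ L]
    (s : ℕ) (g : ℕ → Submodule ℝ L) : Prop where
  pos : 0 < s
  isInternal : DirectSum.IsInternal g
  g_zero : g 0 = ⊥
  g_of_gt : ∀ j, s < j → g j = ⊥
  bracket_eq : ∀ j, 1 ≤ j → j ≤ s → bracketSpan (g j) (g 1) = g (j + 1)
  g_s_ne_bot : g s ≠ ⊥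

/-- The iterated bracket `[...[[E_{w 0}, E_{w 1}], E_{w 2}], ..., E_{w (j-1)}]`. -/
def iterBracket {L : Type*} [LieRing L] [LieAlgebra ℝ L] {d : ℕ} (E : Fin d → L) :
    (j : ℕ) → (Fin j → Fin d) → L
  | 0, _ => 0
  | 1, w => E (w 0)
  | j + 2, w => ⁅iterBracket E (j + 1) (fun k => w k.castSucc), E (w (Fin.last (j + 1)))⁆

/-- The linear map `P_j` from the Euclidean space with orthonormal basis indexed by the
tuples in `{1, ..., d}^j`, sending the basis vector indexed by `w` to the iterated bracket
`[...[[E_{w 0}, E_{w 1}], E_{w 2}], ..., E_{w (j-1)}]`. -/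
noncomputable def projP {L : Type*} [LieRing L] [LieAlgebra ℝ L] {d : ℕ} (E : Fin d → L)
    (j : ℕ) : EuclideanSpace ℝ (Fin j → Fin d) →ₗ[ℝ] L :=
  ((EuclideanSpace.basisFun (Fin j → Fin d) ℝ).toBasis).constr ℝ fun w => iterBracket E j w

/-- The norm associated to a bilinear form `B` on `L`. -/
noncomputable def bnorm {L : Type*} [LieRing L] [LieAlgebra ℝ L]
    (B : L →ₗ[ℝ] L →ₗ[ℝ] ℝ) (x : L) : ℝ :=
  Real.sqrt (B x x)

/-- `B` is the canonical inner product of a stratified Lie algebra with stratification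
`g` of step `s`, relative to the orthonormal basis `E` of the first stratum:
`B` is an inner product, the strata are pairwise orthogonal, `E` is an orthonormal
basis of `g_{-1}`, and for `1 ≤ j ≤ s` the map `P_j` is surjective onto `g_{-j}` and
restricts to a linear isometry from the orthogonal complement of its kernel onto
`g_{-j}`. -/
structure IsCanonicalInner {L : Type*} [LieRing L] [LieAlgebra ℝ L] (s : ℕ) {d : ℕ}
    (g : ℕ → Submodule ℝ L) (B : L →ₗ[ℝ] L →ₗ[ℝ] ℝ) (E : Fin d → L) : Prop where
  symm : ∀ x y, B x y = B y x
  posdef : ∀ x : L, x ≠ 0 → 0 < B x x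
  strata_orth : ∀ i j, i ≠ j → ∀ x ∈ g i, ∀ y ∈ g j, B x y = 0
  basis_mem : ∀ i, E i ∈ g 1
  basis_span : Submodule.span ℝ (Set.range E) = g 1
  basis_orthonormal : ∀ i i', B (E i) (E i') = if i = i' then (1 : ℝ) else 0
  projP_surj : ∀ j, 1 ≤ j → j ≤ s → LinearMap.range (projP E j) = g j
  projP_isometry : ∀ j, 1 ≤ j → j ≤ s →
    ∀ τ ∈ (LinearMap.ker (projP E j))ᗮ, bnorm B (projP E j τ) = ‖τ‖

section AuxLemmas

variable {L : Type*} [LieRing L] [LieAlgebra ℝ L] {d : ℕ}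

lemma sum_lie' {ι : Type*} (s : Finset ι) (f : ι → L) (y : L) :
    ⁅∑ i ∈ s, f i, y⁆ = ∑ i ∈ s, ⁅f i, y⁆ := by
  induction s using Finset.cons_induction with
  | empty => simp
  | cons a s ha ih => simp [Finset.sum_cons, add_lie, ih]

lemma lie_sum' {ι : Type*} (s : Finset ι) (f : ι → L) (y : L) :
    ⁅y, ∑ i ∈ s, f i⁆ = ∑ i ∈ s, ⁅y, f i⁆ := by
  induction s using Finset.cons_induction with
  | empty => simp
  | cons a s ha ih => simp [Finset.sum_cons, lie_add, ih]

lemma projP_apply (E : Fin d → L) (j : ℕ) (x : EuclideanSpace ℝ (Fin j → Fin d)) :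
    projP E j x = ∑ w : Fin j → Fin d, x w • iterBracket E j w := by
  rw [projP, Module.Basis.constr_apply_fintype]
  congr 1

lemma iterBracket_map (T : L ≃ₗ⁅ℝ⁆ L) (E : Fin d → L) :
    ∀ j w, T (iterBracket E j w) = iterBracket (fun i => T (E i)) j w
  | 0, w => by simp only [iterBracket]; exact map_zero T.toLinearEquiv
  | 1, w => by simp [iterBracket]
  | (j+2), w => by
      rw [iterBracket, iterBracket, LieEquiv.map_lie, iterBracket_map T E (j+1)]

lemma iterBracket_smul (t : ℝ) (F : Fin d → L) :
    ∀ j w, iterBracket (fun i => t • F i) j w = t ^ j • iterBracket F j w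
  | 0, w => by simp [iterBracket]
  | 1, w => by simp [iterBracket]
  | (j+2), w => by
      rw [iterBracket, iterBracket_smul t F (j+1), iterBracket, smul_lie, lie_smul,
        smul_smul, ← pow_succ]

lemma iterBracket_expand (c : Fin d → Fin d → ℝ) (E F : Fin d → L)
    (hF : ∀ i, F i = ∑ k, c k i • E k) :
    ∀ j w, iterBracket F j w =
      ∑ v : Fin j → Fin d, (∏ m, c (v m) (w m)) • iterBracket E j v
  | 0, w => by simp [iterBracket]
  | 1, w => by
      rw [iterBracket, hF]
      refine Fintype.sum_equiv (Equiv.funUnique (Fin 1) (Fin d)).symm _ _ fun k => ?_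
      simp [iterBracket]
  | (j+2), w => by
      rw [iterBracket, iterBracket_expand c E F hF (j+1), hF (w (Fin.last (j+1))),
        sum_lie']
      rw [← Equiv.sum_comp (Fin.snocEquiv (fun _ => Fin d))
        (fun u => (∏ m, c (u m) (w m)) • iterBracket E (j+2) u)]
      rw [Fintype.sum_prod_type]
      rw [Finset.sum_comm]
      refine Finset.sum_congr rfl fun v _ => ?_
      rw [lie_sum']
      refine Finset.sum_congr rfl fun k _ => ?_
      rw [smul_lie, lie_smul, smul_smul]
      have h1 : (Fin.snocEquiv (fun _ => Fin d) (k, v)) = Fin.snoc v k := rfl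
      rw [h1]
      have h2 : iterBracket E (j+2) (Fin.snoc v k) = ⁅iterBracket E (j+1) v, E k⁆ := by
        rw [iterBracket]
        congr 1
        · congr 1; funext m; exact @Fin.snoc_castSucc (j+1) (fun _ => Fin d) k v m
        · congr 1; exact @Fin.snoc_last (j+1) (fun _ => Fin d) k v
      rw [h2]
      congr 1
      conv_rhs => rw [Fin.prod_univ_castSucc]
      simp [Fin.snoc_castSucc, Fin.snoc_last]

section BHelpers

variable {s : ℕ} {g : ℕ → Submodule ℝ L} {B : L →ₗ[ℝ] L →ₗ[ℝ] ℝ} {E : Fin d → L}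

lemma B_nonneg (hinner : IsCanonicalInner s g B E) (x : L) : 0 ≤ B x x := by
  rcases eq_or_ne x 0 with rfl | h
  · simp
  · exact (hinner.posdef x h).le

lemma bnorm_sq (hinner : IsCanonicalInner s g B E) (x : L) : bnorm B x ^ 2 = B x x :=
  Real.sq_sqrt (B_nonneg hinner x)

lemma bnorm_nonneg (x : L) : 0 ≤ bnorm B x := Real.sqrt_nonneg _

lemma bnorm_smul (a : ℝ) (x : L) : bnorm B (a • x) = |a| * bnorm B x := by
  unfold bnorm
  have h : (B (a • x)) (a • x) = a ^ 2 * B x x := by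
    simp only [map_smul, LinearMap.smul_apply, smul_eq_mul]
    ring
  rw [h, Real.sqrt_mul (sq_nonneg a), Real.sqrt_sq_eq_abs]

lemma pyth (hinner : IsCanonicalInner s g B E) (u : Finset ℕ) (F : ℕ → L)
    (hmem : ∀ j ∈ u, F j ∈ g j) :
    B (∑ j ∈ u, F j) (∑ j ∈ u, F j) = ∑ j ∈ u, B (F j) (F j) := by
  rw [map_sum]
  refine Finset.sum_congr rfl fun j hj => ?_
  rw [map_sum, LinearMap.sum_apply, Finset.sum_eq_single j]
  · intro k hk hkj
    exact hinner.strata_orth k j hkj _ (hmem k hk) _ (hmem j hj)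
  · intro h; exact absurd hj h

lemma decomp (hstrat : IsStratification s g) (X : L) :
    ∃ f : ℕ →₀ L, (∀ j, f j ∈ g j) ∧ (∀ j ∈ f.support, 1 ≤ j ∧ j ≤ s)
      ∧ X = ∑ j ∈ f.support, f j := by
  have hX : X ∈ iSup g := by
    rw [hstrat.isInternal.submodule_iSup_eq_top]; trivial
  rw [Submodule.mem_iSup_iff_exists_finsupp] at hX
  obtain ⟨f, hf, hsum⟩ := hX
  refine ⟨f, hf, fun j hj => ?_, by rw [← hsum]; rfl⟩
  rw [Finsupp.mem_support_iff] at hj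
  constructor
  · rcases Nat.eq_zero_or_pos j with rfl | h
    · exact absurd ((hstrat.g_zero ▸ hf 0 : f 0 ∈ (⊥ : Submodule ℝ L))) (by simpa using hj)
    · exact h
  · by_contra h
    push_neg at h
    exact hj (by simpa using (hstrat.g_of_gt j h ▸ hf j : f j ∈ (⊥ : Submodule ℝ L)))

end BHelpers

lemma euclid_sum_apply {ι κ : Type*} [Fintype ι] (s : Finset κ)
    (f : κ → EuclideanSpace ℝ ι) (v : ι) : (∑ k ∈ s, f k) v = ∑ k ∈ s, f k v := by
  induction s using Finset.cons_induction with
  | empty => rfl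
  | cons a s ha ih => rw [Finset.sum_cons, Finset.sum_cons, PiLp.add_apply, ih]

set_option maxHeartbeats 2000000 in
lemma stratum_scale {s : ℕ} {g : ℕ → Submodule ℝ L} {B : L →ₗ[ℝ] L →ₗ[ℝ] ℝ} {E : Fin d → L}
    (hinner : IsCanonicalInner s g B E)
    (T : L ≃ₗ⁅ℝ⁆ L) (hT : ∀ k, ∀ x ∈ g k, T x ∈ g k)
    {t : ℝ} (ht : 0 < t) (h1 : ∀ X ∈ g 1, bnorm B (T X) = t * bnorm B X)
    (j : ℕ) (hj1 : 1 ≤ j) (hjs : j ≤ s) (X : L) (hX : X ∈ g j) :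
    bnorm B (T X) = t ^ j * bnorm B X := by
  classical
  -- the rescaled image basis
  set E' : Fin d → L := fun i => t⁻¹ • T (E i) with hE'def
  have hE'mem : ∀ i, E' i ∈ g 1 := fun i =>
    Submodule.smul_mem _ _ (hT 1 _ (hinner.basis_mem i))
  have hTE : ∀ i, T (E i) = t • E' i := by
    intro i
    rw [hE'def]
    simp [smul_smul, mul_inv_cancel₀ ht.ne']
  -- conformality of B under T on the first stratum
  have hq : ∀ X ∈ g 1, B (T X) (T X) = t ^ 2 * B X X := by
    intro X hXm
    rw [← bnorm_sq hinner, h1 X hXm, mul_pow, bnorm_sq hinner]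
  have hBT : ∀ X ∈ g 1, ∀ Y ∈ g 1, B (T X) (T Y) = t ^ 2 * B X Y := by
    intro X hXm Y hYm
    have hexp : ∀ a b : L, B (a + b) (a + b) = B a a + 2 * B a b + B b b := by
      intro a b
      have hsymm := hinner.symm a b
      simp only [map_add, LinearMap.add_apply]
      linarith
    have h3 := hq (X + Y) (Submodule.add_mem _ hXm hYm)
    rw [show T (X + Y) = T X + T Y from T.toLinearEquiv.map_add X Y] at h3
    rw [hexp, hexp] at h3
    have hX2 := hq X hXm
    have hY2 := hq Y hYm
    linarith
  have hE'orth : ∀ i i', B (E' i) (E' i') = if i = i' then (1:ℝ) else 0 := by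
    intro i i'
    rw [hE'def]
    simp only [map_smul, LinearMap.smul_apply, smul_eq_mul]
    rw [hBT _ (hinner.basis_mem i) _ (hinner.basis_mem i'), hinner.basis_orthonormal]
    split_ifs <;> field_simp <;> ring
  -- coefficients of E' in terms of E
  have hrep : ∀ x ∈ g 1, x = ∑ k, B (E k) x • E k := by
    intro x hx
    rw [← hinner.basis_span] at hx
    obtain ⟨a, ha⟩ := (Submodule.mem_span_range_iff_exists_fun ℝ).mp hx
    have hax : ∀ k, B (E k) x = a k := by
      intro k
      rw [← ha, map_sum]
      rw [Finset.sum_congr rfl (fun l _ => by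
        rw [map_smul, smul_eq_mul, hinner.basis_orthonormal])]
      simp [eq_comm]
    have hsum : ∑ k, B (E k) x • E k = ∑ k, a k • E k :=
      Finset.sum_congr rfl fun k _ => by rw [hax k]
    rw [hsum, ha]
  set c : Fin d → Fin d → ℝ := fun k i => B (E k) (E' i) with hcdef
  have hE' : ∀ i, E' i = ∑ k, c k i • E k := fun i => hrep (E' i) (hE'mem i)
  have hcol : ∀ i i', ∑ k, c k i * c k i' = if i = i' then (1:ℝ) else 0 := by
    intro i i'
    rw [← hE'orth i i']
    conv_rhs => rw [hE' i, map_sum, LinearMap.sum_apply]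
    exact (Finset.sum_congr rfl fun k _ => by
      rw [LinearMap.map_smul₂, smul_eq_mul]).symm
  -- the orthogonal change of coordinates Q
  set M : (Fin j → Fin d) → (Fin j → Fin d) → ℝ := fun v w => ∏ m, c (v m) (w m) with hMdef
  set Q : EuclideanSpace ℝ (Fin j → Fin d) →ₗ[ℝ] EuclideanSpace ℝ (Fin j → Fin d) :=
    ((EuclideanSpace.basisFun (Fin j → Fin d) ℝ).toBasis).constr ℝ
      (fun w => (show EuclideanSpace ℝ (Fin j → Fin d) from WithLp.toLp 2 (fun v => M v w))) with hQdef
  have hQapply : ∀ (x : EuclideanSpace ℝ (Fin j → Fin d)) v, Q x v = ∑ w, M v w * x w := by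
    intro x v
    rw [hQdef, Module.Basis.constr_apply_fintype, euclid_sum_apply]
    refine Finset.sum_congr rfl fun w _ => ?_
    rw [PiLp.smul_apply]
    have hx : (EuclideanSpace.basisFun (Fin j → Fin d) ℝ).toBasis.equivFun x w = x w := rfl
    rw [hx, smul_eq_mul, mul_comm]
  have hMM : ∀ w w', ∑ v, M v w * M v w' = if w = w' then (1:ℝ) else 0 := by
    intro w w'
    have h1 : ∀ v : Fin j → Fin d, M v w * M v w' = ∏ m, c (v m) (w m) * c (v m) (w' m) := by
      intro v; rw [hMdef]; rw [← Finset.prod_mul_distrib]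
    rw [Finset.sum_congr rfl fun v _ => h1 v]
    rw [← Fintype.piFinset_univ, Finset.sum_prod_piFinset univ (fun m k => c k (w m) * c k (w' m))]
    by_cases h : w = w'
    · subst h
      simp [hcol]
    · obtain ⟨m, hm⟩ : ∃ m, w m ≠ w' m := by
        by_contra hc; push_neg at hc; exact h (funext hc)
      rw [if_neg h]
      refine Finset.prod_eq_zero (Finset.mem_univ m) ?_
      rw [hcol, if_neg hm]
  have hip : ∀ x y : EuclideanSpace ℝ (Fin j → Fin d), (inner ℝ x y : ℝ) = ∑ v, x v * y v := by
    intro x y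
    simp [PiLp.inner_apply, RCLike.inner_apply, conj_trivial, mul_comm]
  have hQinner : ∀ x y : EuclideanSpace ℝ (Fin j → Fin d),
      (inner ℝ (Q x) (Q y) : ℝ) = inner ℝ x y := by
    intro x y
    rw [hip, hip]
    calc ∑ v, Q x v * Q y v
        = ∑ v, ∑ w, ∑ w', (M v w * M v w') * (x w * y w') := by
          refine Finset.sum_congr rfl fun v _ => ?_
          rw [hQapply, hQapply, Finset.sum_mul]
          refine Finset.sum_congr rfl fun w _ => ?_
          rw [Finset.mul_sum]
          exact Finset.sum_congr rfl fun w' _ => by ring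
      _ = ∑ w, ∑ w', (∑ v, M v w * M v w') * (x w * y w') := by
          rw [Finset.sum_comm]
          refine Finset.sum_congr rfl fun w _ => ?_
          rw [Finset.sum_comm]
          refine Finset.sum_congr rfl fun w' _ => ?_
          rw [Finset.sum_mul]
      _ = ∑ v, x v * y v := by
          refine Finset.sum_congr rfl fun w _ => ?_
          rw [Finset.sum_eq_single w]
          · rw [hMM, if_pos rfl, one_mul]
          · intro w' _ hw'
            rw [hMM, if_neg (Ne.symm hw'), zero_mul]
          · intro h; exact absurd (Finset.mem_univ w) h
  -- the two projections
  have hexpand : ∀ w, iterBracket E' j w = ∑ v, M v w • iterBracket E j v :=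
    fun w => iterBracket_expand c E E' hE' j w
  set P := projP E j with hPdef
  set P' := projP E' j with hP'def
  have hP'Q : ∀ x, P' x = P (Q x) := by
    intro x
    rw [hP'def, hPdef, projP_apply, projP_apply]
    calc ∑ w, x w • iterBracket E' j w
        = ∑ w, ∑ v, (M v w * x w) • iterBracket E j v := by
          refine Finset.sum_congr rfl fun w _ => ?_
          rw [hexpand, Finset.smul_sum]
          exact Finset.sum_congr rfl fun v _ => by rw [smul_smul, mul_comm]
      _ = ∑ v, (∑ w, M v w * x w) • iterBracket E j v := by
          rw [Finset.sum_comm]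
          exact Finset.sum_congr rfl fun v _ => (Finset.sum_smul).symm
      _ = ∑ v, (Q x) v • iterBracket E j v :=
          Finset.sum_congr rfl fun v _ => by rw [hQapply]
  have hTib : ∀ w, T (iterBracket E j w) = t ^ j • iterBracket E' j w := by
    intro w
    rw [iterBracket_map T E j w]
    have hfe : (fun i => T (E i)) = fun i => t • E' i := funext hTE
    rw [hfe, iterBracket_smul]
  have hTP : ∀ x, T (P x) = t ^ j • P' x := by
    intro x
    rw [hPdef, hP'def, projP_apply, projP_apply]
    have h0 : T (∑ w, x w • iterBracket E j w)
        = ∑ w, T.toLinearEquiv (x w • iterBracket E j w) :=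
      map_sum T.toLinearEquiv _ _
    rw [h0, Finset.smul_sum]
    refine Finset.sum_congr rfl fun w _ => ?_
    rw [map_smul]
    have h1' : T.toLinearEquiv (iterBracket E j w) = T (iterBracket E j w) := rfl
    rw [h1', hTib, smul_comm]
  have htj : (0:ℝ) < t ^ j := pow_pos ht j
  have hkerP' : ∀ x, P' x = 0 ↔ P x = 0 := by
    intro x
    constructor
    · intro h
      have h2 : T.toLinearEquiv (P x) = 0 := by
        have := hTP x
        rw [h, smul_zero] at this
        exact this
      exact (LinearEquiv.map_eq_zero_iff T.toLinearEquiv).mp h2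
    · intro h
      have h2 : t ^ j • P' x = 0 := by
        rw [← hTP, h]
        exact map_zero T.toLinearEquiv
      rcases smul_eq_zero.mp h2 with h3 | h3
      · exact absurd h3 htj.ne'
      · exact h3
  set K := LinearMap.ker P with hKdef
  have hQinj : Function.Injective Q := by
    intro a b hab
    have hz : Q (a - b) = 0 := by rw [map_sub, hab, sub_self]
    have h0 : (inner ℝ (a - b) (a - b) : ℝ) = 0 := by rw [← hQinner, hz, inner_zero_right]
    exact sub_eq_zero.mp (inner_self_eq_zero.mp h0)
  have hQK : ∀ y, P y = 0 → ∃ x, P x = 0 ∧ Q x = y := by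
    intro y hy
    obtain ⟨x, rfl⟩ := (LinearMap.injective_iff_surjective.mp hQinj) y
    exact ⟨x, (hkerP' x).mp (by rw [hP'Q] at *; exact hy), rfl⟩
  have hQorthmem : ∀ τ ∈ Kᗮ, Q τ ∈ Kᗮ := by
    intro τ hτ
    rw [Submodule.mem_orthogonal]
    intro y hy
    obtain ⟨x, hx0, rfl⟩ := hQK y (LinearMap.mem_ker.mp hy)
    rw [hQinner x τ]
    exact (Submodule.mem_orthogonal K τ).mp hτ x (LinearMap.mem_ker.mpr hx0)
  -- conclusion
  have hXr : X ∈ LinearMap.range P := by rw [hPdef, hinner.projP_surj j hj1 hjs]; exact hX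
  obtain ⟨σ, hσ⟩ := hXr
  obtain ⟨y, hy, τ, hτ, hyt⟩ := K.exists_add_mem_mem_orthogonal σ
  have hPτ : P τ = X := by
    rw [← hσ, hyt, map_add, LinearMap.mem_ker.mp hy, zero_add]
  have h2 : bnorm B X = ‖τ‖ := by rw [← hPτ]; exact hinner.projP_isometry j hj1 hjs τ hτ
  have h3 : T X = t ^ j • P (Q τ) := by rw [← hPτ, hTP, hP'Q]
  have h4 : ‖Q τ‖ = ‖τ‖ := by
    have h5 := hQinner τ τ
    rw [real_inner_self_eq_norm_mul_norm, real_inner_self_eq_norm_mul_norm] at h5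
    nlinarith [norm_nonneg (Q τ), norm_nonneg τ]
  rw [h3, bnorm_smul, abs_of_pos htj,
    hinner.projP_isometry j hj1 hjs _ (hQorthmem τ hτ), h4, h2]

end AuxLemmas

/-- if a conformal strata-preserving automorphism `T` of a stratified Lie
algebra with its canonical inner product preserves the norm of one nonzero element, then
it is isometric on all of `g`. -/
theorem conformal_automorphism_isometric_of_norm_eq
    {L : Type*} [LieRing L] [LieAlgebra ℝ L] [FiniteDimensional ℝ L]
    {s d : ℕ} {g : ℕ → Submodule ℝ L} {B : L →ₗ[ℝ] L →ₗ[ℝ] ℝ} {E : Fin d → L}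
    (hstrat : IsStratification s g) (hinner : IsCanonicalInner s g B E)
    (T : L ≃ₗ⁅ℝ⁆ L) (hT : ∀ k, ∀ x ∈ g k, T x ∈ g k)
    {t : ℝ} (ht : 0 < t) (h1 : ∀ X ∈ g 1, bnorm B (T X) = t * bnorm B X)
    {X₀ : L} (hX₀ : X₀ ≠ 0) (hnorm : bnorm B (T X₀) = bnorm B X₀) :
    ∀ X : L, bnorm B (T X) = bnorm B X := by
  classical
  have key : ∀ j, 1 ≤ j → j ≤ s → ∀ X ∈ g j, bnorm B (T X) = t ^ j * bnorm B X :=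
    fun j hj1 hjs X hX => stratum_scale hinner T hT ht h1 j hj1 hjs X hX
  have keyB : ∀ j, 1 ≤ j → j ≤ s → ∀ X ∈ g j, B (T X) (T X) = t ^ (2*j) * B X X := by
    intro j hj1 hjs X hX
    rw [← bnorm_sq hinner, key j hj1 hjs X hX, mul_pow, bnorm_sq hinner, ← pow_mul]
    ring_nf
  have hTsum : ∀ (u : Finset ℕ) (F : ℕ → L), T (∑ j ∈ u, F j) = ∑ j ∈ u, T (F j) :=
    fun u F => map_sum T.toLinearEquiv F u
  obtain ⟨f, hfmem, hfsupp, hfsum⟩ := decomp hstrat X₀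
  have hBX : B X₀ X₀ = ∑ j ∈ f.support, B (f j) (f j) := by
    rw [hfsum]; exact pyth hinner _ _ (fun j _ => hfmem j)
  have hBTX : B (T X₀) (T X₀) = ∑ j ∈ f.support, t ^ (2*j) * B (f j) (f j) := by
    rw [hfsum, hTsum, pyth hinner _ _ (fun j _ => hT j _ (hfmem j))]
    exact Finset.sum_congr rfl fun j hj => keyB j (hfsupp j hj).1 (hfsupp j hj).2 _ (hfmem j)
  have hBeq : B (T X₀) (T X₀) = B X₀ X₀ := by
    rw [← bnorm_sq hinner, ← bnorm_sq hinner, hnorm]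
  have ht1 : t = 1 := by
    by_contra hne
    have hkey : ∑ j ∈ f.support, (t ^ (2*j) - 1) * B (f j) (f j) = 0 := by
      have h0 : ∑ j ∈ f.support, (t^(2*j) * B (f j) (f j) - B (f j) (f j)) = 0 := by
        rw [Finset.sum_sub_distrib, ← hBTX, ← hBX, hBeq, sub_self]
      rw [← h0]
      exact Finset.sum_congr rfl fun j _ => by ring
    have hne' : f.support.Nonempty := by
      rw [Finsupp.support_nonempty_iff]
      intro h0
      exact hX₀ (by rw [hfsum, h0]; simp)
    have hpos : ∀ j ∈ f.support, 0 < B (f j) (f j) :=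
      fun j hj => hinner.posdef _ (Finsupp.mem_support_iff.mp hj)
    rcases lt_or_gt_of_ne hne with hlt | hgt
    · have hterm : ∀ j ∈ f.support, (t ^ (2*j) - 1) * B (f j) (f j) < 0 := by
        intro j hj
        have h2j : t ^ (2*j) < 1 :=
          pow_lt_one₀ ht.le hlt (by have := (hfsupp j hj).1; omega)
        exact mul_neg_of_neg_of_pos (by linarith) (hpos j hj)
      have hlt0 := Finset.sum_lt_sum_of_nonempty hne' hterm
      simp only [Finset.sum_const_zero] at hlt0
      linarith
    · have hterm : ∀ j ∈ f.support, 0 < (t ^ (2*j) - 1) * B (f j) (f j) := by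
        intro j hj
        have h2j : 1 < t ^ (2*j) :=
          one_lt_pow₀ hgt (by have := (hfsupp j hj).1; omega)
        exact mul_pos (by linarith) (hpos j hj)
      have hgt0 := Finset.sum_lt_sum_of_nonempty hne' hterm
      simp only [Finset.sum_const_zero] at hgt0
      linarith
  subst ht1
  intro X
  obtain ⟨f', hfmem', hfsupp', hfsum'⟩ := decomp hstrat X
  have hBX' : B X X = ∑ j ∈ f'.support, B (f' j) (f' j) := by
    rw [hfsum']; exact pyth hinner _ _ (fun j _ => hfmem' j)
  have hBTX' : B (T X) (T X) = ∑ j ∈ f'.support, B (f' j) (f' j) := by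
    rw [hfsum', hTsum, pyth hinner _ _ (fun j _ => hT j _ (hfmem' j))]
    refine Finset.sum_congr rfl fun j hj => ?_
    have hk := keyB j (hfsupp' j hj).1 (hfsupp' j hj).2 _ (hfmem' j)
    simpa using hk
  rw [bnorm, bnorm, hBTX', ← hBX']
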